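/- arXiv:2111.04049 — 7 statements merged into one kernel-verified Lean document; each statement's English description precedes it below -/
import Mathlib

section
/- Let q ≥ 2 be an integer and let a, b be real formal power series such that a_N = 0 whenever N mod q < q − ⌊q/2⌋ and b_N = 0 whenever N mod q < q − ⌊q/2⌋ (in particular a_0 = b_0 = 0). Then a ∘ b = 0, where ∘ is the P_{0,q}-convolution. Equivalently, for all N, M ∈ ℕ with N mod q ≥ q − ⌊q/2⌋ and M mod q ≥ q − ⌊q/2⌋ one has w_q(N+M, M) = 0. -/
open PowerSeries Finset

noncomputable def wq (q n m : ℕ) : ℝ := if m % q ≤ n % q then 1 else 0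

noncomputable def conv (w : ℕ → ℕ → ℝ) (a b : PowerSeries ℝ) : PowerSeries ℝ :=
  PowerSeries.mk fun n => ∑ m ∈ Finset.range (n + 1), w n m * coeff m a * coeff (n - m) b

theorem conv_eq_zero_of_forall_add {w : ℕ → ℕ → ℝ} {a b : PowerSeries ℝ}
    (h : ∀ N M : ℕ, coeff M a ≠ 0 → coeff N b ≠ 0 → w (N + M) M = 0) :
    conv w a b = 0 := by
  ext n
  rw [conv, coeff_mk, map_zero]
  refine sum_eq_zero fun m hm => ?_
  obtain ⟨N, rfl⟩ : ∃ N, n = N + m := ⟨n - m, by grind⟩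
  rw [Nat.add_sub_cancel]
  by_cases ha : coeff m a = 0
  · simp [ha]
  by_cases hb : coeff N b = 0
  · simp [hb]
  simp [h N m ha hb]

/-- The sum wraps around modulo `q`, so the residue of `M` drops by `q - N % q > 0`. -/
theorem Nat.add_mod_lt_mod_right {q N M : ℕ} (hq : 0 < q) (h : q ≤ N % q + M % q) :
    (N + M) % q < M % q := by
  rw [Nat.add_mod_eq_ite, if_pos h]
  have := Nat.mod_lt N hq
  omega

theorem wq_add_eq_zero {q N M : ℕ} (hq : 0 < q) (hN : q - q / 2 ≤ N % q)
    (hM : q - q / 2 ≤ M % q) : wq q (N + M) M = 0 :=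
  if_neg (Nat.not_le.2 (Nat.add_mod_lt_mod_right hq (by omega)))

/-- Series supported on residues `N % q ≥ q - ⌊q/2⌋` are closed zero divisors for the
`P_{0,q}`-convolution. -/
theorem stmt0 (q : ℕ) (hq : 2 ≤ q) (a b : PowerSeries ℝ)
    (ha : ∀ N : ℕ, N % q < q - q / 2 → coeff N a = 0)
    (hb : ∀ N : ℕ, N % q < q - q / 2 → coeff N b = 0) :
    conv (wq q) a b = 0 ∧
      ∀ N M : ℕ, q - q / 2 ≤ N % q → q - q / 2 ≤ M % q → wq q (N + M) M = 0 := by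
  have hq_pos : 0 < q := by omega
  refine ⟨conv_eq_zero_of_forall_add fun N M hM hN => ?_, fun N M => wq_add_eq_zero hq_pos⟩
  exact wq_add_eq_zero hq_pos (not_lt.1 (mt (hb N) hN)) (not_lt.1 (mt (ha M) hM))
end

section
/- Let q ≥ 2 be an integer and let a₁, a₂, b₁, b₂ be arbitrary real formal power series. Then ([b₁]_q · a₁(x^q)) ∘ ([b₂]_q · a₂(x^q)) = [b₁·b₂]_q · (a₁·a₂)(x^q), where ∘ is the P_{0,q}-convolution, · denotes the ordinary product of formal power series, [f]_q = Σ_{n=0}^{q−1} f_n x^n is truncation below degree q, and f(x^q) denotes substitution of x^q for x. -/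
open PowerSeries Finset

/-- Truncation below degree `q`: `[f]_q = Σ_{n<q} f_n x^n`. -/
noncomputable def truncQ (q : ℕ) (f : PowerSeries ℝ) : PowerSeries ℝ :=
  PowerSeries.mk fun n => if n < q then coeff n f else 0

/-- Substitution of `x^q` for `x`. -/
noncomputable def substPow (q : ℕ) (f : PowerSeries ℝ) : PowerSeries ℝ :=
  PowerSeries.mk fun n => if q ∣ n then coeff (n / q) f else 0

/-! The coefficient of `x^n` in `[b]_q · a(x^q)` is `b_u a_s` for the base-`q` digits
`n = q s + u`. For `m % q ≤ n % q` the subtraction `n - m` involves no borrow, so the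
weighted convolution splits into a product of two ordinary convolutions, one in the
low digit `u` and one in the high digit `s`. -/

namespace Nat

theorem sub_eq_mul_add_of_mod_le {q m n : ℕ} (hmn : m ≤ n) (h : m % q ≤ n % q) :
    n - m = q * (n / q - m / q) + (n % q - m % q) := by
  have hdiv : q * (m / q) ≤ q * (n / q) := Nat.mul_le_mul_left _ (Nat.div_le_div_right hmn)
  have hn := Nat.div_add_mod n q
  have hm := Nat.div_add_mod m q
  rw [Nat.mul_sub]
  omega

theorem sub_mod_of_mod_le {q m n : ℕ} (hq : 0 < q) (hmn : m ≤ n) (h : m % q ≤ n % q) :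
    (n - m) % q = n % q - m % q := by
  rw [sub_eq_mul_add_of_mod_le hmn h, Nat.mul_add_mod,
    Nat.mod_eq_of_lt ((Nat.sub_le _ _).trans_lt (Nat.mod_lt _ hq))]

theorem sub_div_of_mod_le {q m n : ℕ} (hq : 0 < q) (hmn : m ≤ n) (h : m % q ≤ n % q) :
    (n - m) / q = n / q - m / q := by
  rw [sub_eq_mul_add_of_mod_le hmn h, Nat.mul_add_div hq,
    Nat.div_eq_of_lt ((Nat.sub_le _ _).trans_lt (Nat.mod_lt _ hq)), add_zero]

end Nat

theorem sum_filter_mod_le_eq_sum_sum {M : Type*} [AddCommMonoid M] {q : ℕ} (hq : 0 < q)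
    (n : ℕ) (f : ℕ → ℕ → M) :
    ∑ m ∈ (range (n + 1)).filter (fun m => m % q ≤ n % q), f (m % q) (m / q) =
      ∑ u ∈ range (n % q + 1), ∑ s ∈ range (n / q + 1), f u s := by
  rw [← sum_product']
  refine sum_nbij' (fun m => (m % q, m / q)) (fun p => q * p.2 + p.1) ?_ ?_ ?_ ?_ ?_
  · intro m hm
    rw [mem_filter, mem_range] at hm
    rw [mem_product, mem_range, mem_range]
    exact ⟨Nat.lt_succ_of_le hm.2, Nat.lt_succ_of_le (Nat.div_le_div_right (by omega))⟩
  · rintro ⟨u, s⟩ hus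
    rw [mem_product, mem_range, mem_range] at hus
    rw [mem_filter, mem_range]
    dsimp only
    have hu : u < q := (Nat.le_of_lt_succ hus.1).trans_lt (Nat.mod_lt _ hq)
    have hs : q * s ≤ q * (n / q) := Nat.mul_le_mul_left _ (Nat.le_of_lt_succ hus.2)
    rw [Nat.mul_add_mod, Nat.mod_eq_of_lt hu]
    have := Nat.div_add_mod n q
    omega
  · intro m _
    exact Nat.div_add_mod m q
  · rintro ⟨u, s⟩ hus
    rw [mem_product, mem_range, mem_range] at hus
    have hu : u < q := (Nat.le_of_lt_succ hus.1).trans_lt (Nat.mod_lt _ hq)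
    simp only [Nat.mul_add_mod, Nat.mod_eq_of_lt hu, Nat.mul_add_div hq, Nat.div_eq_of_lt hu,
      add_zero]
  · exact fun _ _ => rfl

theorem coeff_truncQ_mul_substPow {q : ℕ} (hq : 0 < q) (a b : PowerSeries ℝ) (n : ℕ) :
    coeff n (truncQ q b * substPow q a) = coeff (n % q) b * coeff (n / q) a := by
  rw [coeff_mul, sum_eq_single (n % q, q * (n / q))]
  · simp [truncQ, substPow, Nat.mod_lt _ hq, Nat.mul_div_cancel_left _ hq]
  · rintro ⟨i, j⟩ hij hne
    rw [HasAntidiagonal.mem_antidiagonal] at hij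
    simp only [truncQ, substPow, coeff_mk]
    split_ifs with hi hj
    · obtain ⟨s, rfl⟩ := hj
      refine absurd ?_ hne
      rw [← hij, Nat.add_mul_mod_self_left, Nat.mod_eq_of_lt hi, Nat.add_mul_div_left _ _ hq,
        Nat.div_eq_of_lt hi, zero_add]
    all_goals simp
  · exact fun h => (h (HasAntidiagonal.mem_antidiagonal.mpr (Nat.mod_add_div n q))).elim

theorem coeff_conv_wq (q : ℕ) (a b : PowerSeries ℝ) (n : ℕ) :
    coeff n (conv (wq q) a b) =
      ∑ m ∈ (range (n + 1)).filter (fun m => m % q ≤ n % q), coeff m a * coeff (n - m) b := by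
  rw [conv, coeff_mk, sum_filter]
  refine sum_congr rfl fun m _ => ?_
  rw [wq, mul_assoc]
  split_ifs <;> simp

theorem coeff_mul_eq_sum_range {R : Type*} [Semiring R] (a b : R⟦X⟧) (n : ℕ) :
    coeff n (a * b) = ∑ k ∈ range (n + 1), coeff k a * coeff (n - k) b := by
  rw [coeff_mul, Nat.sum_antidiagonal_eq_sum_range_succ_mk]

theorem truncQ_zero (f : PowerSeries ℝ) : truncQ 0 f = 0 := by
  ext n
  simp [truncQ]

theorem conv_zero_left (w : ℕ → ℕ → ℝ) (b : PowerSeries ℝ) : conv w 0 b = 0 := by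
  ext n
  simp [conv]

theorem stmt1_general (q : ℕ) (a₁ a₂ b₁ b₂ : PowerSeries ℝ) :
    conv (wq q) (truncQ q b₁ * substPow q a₁) (truncQ q b₂ * substPow q a₂) =
      truncQ q (b₁ * b₂) * substPow q (a₁ * a₂) := by
  rcases Nat.eq_zero_or_pos q with rfl | hq
  · simp only [truncQ_zero, zero_mul, conv_zero_left]
  ext n
  rw [coeff_conv_wq, coeff_truncQ_mul_substPow hq, coeff_mul_eq_sum_range b₁,
    coeff_mul_eq_sum_range a₁, sum_mul_sum,
    ← sum_filter_mod_le_eq_sum_sum hq n fun u s =>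
      coeff u b₁ * coeff (n % q - u) b₂ * (coeff s a₁ * coeff (n / q - s) a₂)]
  refine sum_congr rfl fun m hm => ?_
  rw [mem_filter, mem_range] at hm
  have hmn : m ≤ n := Nat.le_of_lt_succ hm.1
  simp only [coeff_truncQ_mul_substPow hq, Nat.sub_mod_of_mod_le hq hmn hm.2,
    Nat.sub_div_of_mod_le hq hmn hm.2]
  ring

/-- Block multiplication rule:
`([b₁]_q · a₁(x^q)) ∘ ([b₂]_q · a₂(x^q)) = [b₁·b₂]_q · (a₁·a₂)(x^q)`. -/
theorem stmt1 (q : ℕ) (hq : 2 ≤ q) (a₁ a₂ b₁ b₂ : PowerSeries ℝ) :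
    conv (wq q) (truncQ q b₁ * substPow q a₁) (truncQ q b₂ * substPow q a₂) =
      truncQ q (b₁ * b₂) * substPow q (a₁ * a₂) :=
  stmt1_general q a₁ a₂ b₁ b₂
end

section
/- Let q ≥ 2 be an integer and let a, b be real formal power series with constant term 1. Then log_∘([b]_q · a(x^q)) = [log b]_q + (log a)(x^q), where log_∘ is the ∘-logarithm with respect to the P_{0,q}-convolution, log on the right-hand side is the ordinary formal power series logarithm, [f]_q = Σ_{n=0}^{q−1} f_n x^n is truncation below degree q, · is the ordinary product, and (log a)(x^q) denotes substitution of x^q into log a. -/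
open PowerSeries Finset

/-- Iterated `∘`-power `f^{(k)}` with respect to a weight `w`. -/
noncomputable def convPow (w : ℕ → ℕ → ℝ) (f : PowerSeries ℝ) : ℕ → PowerSeries ℝ
  | 0 => 1
  | k + 1 => conv w f (convPow w f k)

/-- The `∘`-logarithm `log_∘ f = Σ_{n≥1} ((−1)^{n−1}/n)·(f−1)^{(n)}`, computed coefficientwise
(the sum is finite in each coefficient since `(f−1)^{(n)}` has order `≥ n`). -/
noncomputable def convLog (w : ℕ → ℕ → ℝ) (f : PowerSeries ℝ) : PowerSeries ℝ :=
  PowerSeries.mk fun N =>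
    ∑ n ∈ Finset.Icc 1 N, ((-1 : ℝ) ^ (n - 1) / n) * coeff N (convPow w (f - 1) n)

/-- The ordinary formal power series logarithm
`log f = Σ_{n≥1} ((−1)^{n−1}/n)·(f−1)^n`, computed coefficientwise. -/
noncomputable def logSeries (f : PowerSeries ℝ) : PowerSeries ℝ :=
  PowerSeries.mk fun N =>
    ∑ n ∈ Finset.Icc 1 N, ((-1 : ℝ) ^ (n - 1) / n) * coeff N ((f - 1) ^ n)

/-! The Euler operator `E = x d/dx` is a derivation for every weighted convolution. When the
weight makes `∘` commutative, associative and unital, telescoping `Σ (-1)^k (f - 1)^{(k)}`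
(a `∘`-inverse of `f`) gives `f ∘ E(log_∘ f) = E f`. As `f ∘ ·` is injective when `f` has
constant term `1`, and `E` is injective on series without constant term, this identity
characterises `log_∘ f`.

The weight `w_q(m + k, m)` is `1` exactly when adding the last base-`q` digits of `m` and `k`
produces no carry. So `w_q` is such a weight, and `∘` is the ordinary product on the pair
`[b]_q`, `a(x^q)` and on pairs of series in `x^q`, and the truncated product on pairs of
polynomials of degree `< q`. Hence `[log b]_q` and `(log a)(x^q)` satisfy the characterising
identity for `[b]_q` and `a(x^q)`, and the Leibniz rule adds the two. -/

section Convolution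

variable (w : ℕ → ℕ → ℝ)

@[simp]
lemma coeff_conv (u v : PowerSeries ℝ) (n : ℕ) :
    coeff n (conv w u v) = ∑ m ∈ range (n + 1), w n m * coeff m u * coeff (n - m) v :=
  coeff_mk _ _

lemma conv_add_left (u v t : PowerSeries ℝ) : conv w (u + v) t = conv w u t + conv w v t := by
  ext n; simp [mul_add, add_mul, sum_add_distrib]

lemma conv_add_right (u v t : PowerSeries ℝ) : conv w u (v + t) = conv w u v + conv w u t := by
  ext n; simp [mul_add, sum_add_distrib]

lemma conv_sub_left (u v t : PowerSeries ℝ) : conv w (u - v) t = conv w u t - conv w v t := by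
  ext n; simp [mul_sub, sub_mul, sum_sub_distrib]

lemma conv_sub_right (u v t : PowerSeries ℝ) : conv w u (v - t) = conv w u v - conv w u t := by
  ext n; simp [mul_sub, sum_sub_distrib]

lemma conv_smul_left (c : ℝ) (u t : PowerSeries ℝ) :
    conv w (c • u) t = c • conv w u t := by
  ext n; simp [mul_sum, mul_left_comm, mul_assoc]

lemma conv_smul_right (c : ℝ) (u t : PowerSeries ℝ) :
    conv w u (c • t) = c • conv w u t := by
  ext n; simp [mul_sum, mul_left_comm]

lemma conv_sum_left {ι : Type*} (s : Finset ι) (F : ι → PowerSeries ℝ)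
    (t : PowerSeries ℝ) :
    conv w (∑ i ∈ s, F i) t = ∑ i ∈ s, conv w (F i) t :=
  map_sum (AddMonoidHom.mk' (conv w · t) fun u v => conv_add_left w u v t) F s

lemma coeff_conv_eq_zero_of_lt {u v : PowerSeries ℝ} {α β n : ℕ}
    (hu : ∀ j < α, coeff j u = 0) (hv : ∀ j < β, coeff j v = 0) (hn : n < α + β) :
    coeff n (conv w u v) = 0 := by
  rw [coeff_conv]
  refine sum_eq_zero fun m hm => ?_
  rcases lt_or_ge m α with h | h
  · simp [hu m h]
  · simp [hv (n - m) (by grind)]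

lemma coeff_conv_congr_right {u v v' : PowerSeries ℝ} {N : ℕ}
    (h : ∀ j ≤ N, coeff j v = coeff j v') :
    coeff N (conv w u v) = coeff N (conv w u v') := by
  simp only [coeff_conv]
  exact sum_congr rfl fun m _ => by rw [h (N - m) (Nat.sub_le N m)]

lemma coeff_convPow_eq_zero_of_lt {g : PowerSeries ℝ} (hg : constantCoeff g = 0) {k N : ℕ}
    (h : N < k) : coeff N (convPow w g k) = 0 := by
  induction k generalizing N with
  | zero => omega
  | succ k ih =>
    refine coeff_conv_eq_zero_of_lt w (α := 1) (β := k) (fun j hj => ?_) (fun j => ih) (by omega)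
    rwa [Nat.lt_one_iff.mp hj, coeff_zero_eq_constantCoeff]

lemma conv_one_left (hw0 : ∀ n, w n 0 = 1) (v : PowerSeries ℝ) : conv w 1 v = v := by
  ext n
  rw [coeff_conv, sum_eq_single 0 (fun m _ hm => by simp [coeff_one, hm]) (by simp)]
  simp [hw0]

lemma conv_left_cancel (hw0 : ∀ n, w n 0 = 1) {f u v : PowerSeries ℝ}
    (hf : constantCoeff f = 1) (h : conv w f u = conv w f v) : u = v := by
  rw [← sub_eq_zero]
  set d := u - v
  have hd : conv w f d = 0 := by rw [conv_sub_right, h, sub_self]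
  ext n
  induction n using Nat.strong_induction_on with
  | _ n ih =>
    have hn := congrArg (coeff n) hd
    rw [coeff_conv, sum_eq_single 0] at hn
    · simpa [hw0, hf] using hn
    · intro m hm hm0
      simp [ih (n - m) (by grind)]
    · simp

lemma conv_convPow_sub_one (hw0 : ∀ n, w n 0 = 1) (f : PowerSeries ℝ) (k : ℕ) :
    conv w f (convPow w (f - 1) k) = convPow w (f - 1) k + convPow w (f - 1) (k + 1) := by
  rw [show conv w f _ = conv w (1 + (f - 1)) (convPow w (f - 1) k) by rw [add_sub_cancel],
    conv_add_left, conv_one_left w hw0, convPow]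

lemma conv_sum_neg_one_pow_convPow (hw0 : ∀ n, w n 0 = 1) (f : PowerSeries ℝ) (M : ℕ) :
    conv w f (∑ k ∈ range M, (-1 : ℝ) ^ k • convPow w (f - 1) k) =
      1 - (-1 : ℝ) ^ M • convPow w (f - 1) M := by
  induction M with
  | zero => ext n; simp [convPow]
  | succ M ih =>
    rw [sum_range_succ, conv_add_right, ih, conv_smul_right, conv_convPow_sub_one w hw0, pow_succ]
    module

lemma coeff_convLog_eq_sum {f : PowerSeries ℝ} (hf : constantCoeff f = 1)
    {j M : ℕ} (hj : j ≤ M) :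
    coeff j (convLog w f) =
      ∑ k ∈ range M, (-1 : ℝ) ^ k / (k + 1) * coeff j (convPow w (f - 1) (k + 1)) := by
  have hg : constantCoeff (f - 1) = 0 := by simp [hf]
  rw [convLog, coeff_mk, ← Ico_add_one_right_eq_Icc, sum_Ico_eq_sum_range, Nat.add_sub_cancel]
  refine sum_subset (range_subset_range.mpr hj) (fun k _ hk => ?_) |>.trans (sum_congr rfl ?_)
  · rw [coeff_convPow_eq_zero_of_lt w hg (by simp at hk; omega), mul_zero]
  · intro k _
    simp [add_comm 1 k]

end Convolution

noncomputable def eulerOp : PowerSeries ℝ →ₗ[ℝ] PowerSeries ℝ where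
  toFun f := mk fun n => n * coeff n f
  map_add' f g := by ext; simp [mul_add]
  map_smul' c f := by ext; simp [mul_left_comm]

@[simp]
lemma coeff_eulerOp (f : PowerSeries ℝ) (n : ℕ) : coeff n (eulerOp f) = n * coeff n f :=
  coeff_mk n fun n => (n : ℝ) * coeff n f

@[simp]
lemma eulerOp_one : eulerOp 1 = 0 := by
  ext n; simp [coeff_one]

lemma eq_of_eulerOp_eq {u v : PowerSeries ℝ} (h : eulerOp u = eulerOp v)
    (h0 : constantCoeff u = constantCoeff v) : u = v := by
  ext (_ | n)
  · simpa using h0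
  · simpa [Nat.cast_add_one_ne_zero] using congrArg (coeff (n + 1)) h

lemma eulerOp_conv (w : ℕ → ℕ → ℝ) (u v : PowerSeries ℝ) :
    eulerOp (conv w u v) = conv w (eulerOp u) v + conv w u (eulerOp v) := by
  ext n
  simp only [coeff_eulerOp, coeff_conv, map_add, mul_sum, ← sum_add_distrib]
  refine sum_congr rfl fun m hm => ?_
  rw [Nat.cast_sub (by grind)]
  ring

structure IsCommConvWeight (w : ℕ → ℕ → ℝ) : Prop where
  weight_zero : ∀ n, w n 0 = 1
  weight_comm : ∀ m k, w (m + k) m = w (m + k) k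
  weight_assoc : ∀ i j k, w (i + j + k) (i + j) * w (i + j) i = w (i + j + k) i * w (j + k) j

namespace IsCommConvWeight

variable {w : ℕ → ℕ → ℝ} (hw : IsCommConvWeight w)
include hw

lemma conv_comm (u v : PowerSeries ℝ) : conv w u v = conv w v u := by
  ext n
  rw [coeff_conv, coeff_conv, ← sum_range_reflect]
  refine sum_congr rfl fun m hm => ?_
  have hmn : m ≤ n := Nat.lt_succ_iff.mp (mem_range.mp hm)
  have hsymm := hw.weight_comm (n - m) m
  rw [Nat.sub_add_cancel hmn] at hsymm
  rw [Nat.add_sub_cancel, Nat.sub_sub_self hmn, hsymm]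
  ring

lemma conv_assoc (u v t : PowerSeries ℝ) : conv w (conv w u v) t = conv w u (conv w v t) := by
  ext n
  simp only [coeff_conv, sum_mul, mul_sum]
  rw [sum_comm' (t' := range (n + 1)) (s' := fun i => Ico i (n + 1))
    (by intro m i; simp only [mem_range, mem_Ico]; omega)]
  refine sum_congr rfl fun i _ => ?_
  rw [sum_Ico_eq_sum_range, show n + 1 - i = n - i + 1 by grind]
  refine sum_congr rfl fun j _ => ?_
  have hcocycle := hw.weight_assoc i j (n - i - j)
  rw [show i + j + (n - i - j) = n by grind, show j + (n - i - j) = n - i by grind] at hcocycle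
  rw [Nat.add_sub_cancel_left, show n - (i + j) = n - i - j by omega]
  linear_combination (coeff i u * coeff j v * coeff (n - i - j) t) * hcocycle

lemma eulerOp_convPow_succ (g : PowerSeries ℝ) (k : ℕ) :
    eulerOp (convPow w g (k + 1)) = ((k : ℝ) + 1) • conv w (convPow w g k) (eulerOp g) := by
  induction k with
  | zero =>
    simp only [convPow]
    rw [hw.conv_comm g 1, conv_one_left w hw.weight_zero,
      conv_one_left w hw.weight_zero, Nat.cast_zero, zero_add, one_smul]
  | succ k ih =>
    rw [convPow, eulerOp_conv, ih, conv_smul_right, ← hw.conv_assoc, ← convPow,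
      hw.conv_comm (eulerOp g)]
    push_cast
    module

lemma conv_eulerOp_convLog {f : PowerSeries ℝ} (hf : constantCoeff f = 1) :
    conv w f (eulerOp (convLog w f)) = eulerOp f := by
  set g := f - 1
  have hg : constantCoeff g = 0 := by simp [g, hf]
  have hEg : eulerOp g = eulerOp f := by simp [g]
  ext N
  set S := ∑ k ∈ range (N + 1), ((-1 : ℝ) ^ k / (k + 1)) • convPow w g (k + 1)
  have hS : ∀ j ≤ N, coeff j (eulerOp (convLog w f)) = coeff j (eulerOp S) := by
    intro j hj
    simp [S, coeff_convLog_eq_sum w hf (Nat.le_succ_of_le hj), map_sum, mul_sum, mul_left_comm,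
      g]
  have hES : eulerOp S =
      conv w (∑ k ∈ range (N + 1), (-1 : ℝ) ^ k • convPow w g k) (eulerOp f) := by
    simp only [S, map_sum, map_smul, hw.eulerOp_convPow_succ, hEg, smul_smul, conv_sum_left,
      conv_smul_left]
    refine sum_congr rfl fun k _ => ?_
    rw [div_mul_cancel₀ _ (by positivity)]
  have hvanish : coeff N (conv w (convPow w g (N + 1)) (eulerOp f)) = 0 :=
    coeff_conv_eq_zero_of_lt w (β := 0) (fun j => coeff_convPow_eq_zero_of_lt w hg) (by simp)
      (by omega)
  calc coeff N (conv w f (eulerOp (convLog w f)))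
      = coeff N (conv w f (eulerOp S)) := coeff_conv_congr_right w hS
    _ = coeff N (conv w (1 - (-1 : ℝ) ^ (N + 1) • convPow w g (N + 1)) (eulerOp f)) := by
      rw [hES, ← hw.conv_assoc, conv_sum_neg_one_pow_convPow w hw.weight_zero]
    _ = coeff N (eulerOp f) := by
      rw [conv_sub_left, conv_one_left w hw.weight_zero, conv_smul_left, map_sub, map_smul,
        hvanish, smul_zero, sub_zero]

lemma conv_eulerOp_add {u v U V : PowerSeries ℝ} (hu : conv w u (eulerOp U) = eulerOp u)
    (hv : conv w v (eulerOp V) = eulerOp v) :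
    conv w (conv w u v) (eulerOp (U + V)) = eulerOp (conv w u v) := by
  have hU : conv w (conv w u v) (eulerOp U) = conv w v (eulerOp u) := by
    rw [hw.conv_comm u v, hw.conv_assoc, hu]
  have hV : conv w (conv w u v) (eulerOp V) = conv w u (eulerOp v) := by
    rw [hw.conv_assoc, hv]
  rw [map_add, conv_add_right, hU, hV, eulerOp_conv, hw.conv_comm v]

end IsCommConvWeight

lemma conv_one_weight_eq_mul (u v : PowerSeries ℝ) : conv (fun _ _ => 1) u v = u * v := by
  ext n
  simp [coeff_mul, Nat.sum_antidiagonal_eq_sum_range_succ_mk]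

lemma isCommConvWeight_one : IsCommConvWeight fun _ _ => 1 :=
  ⟨fun _ => rfl, fun _ _ => rfl, fun _ _ _ => rfl⟩

lemma convPow_one_weight_eq_pow (g : PowerSeries ℝ) (k : ℕ) :
    convPow (fun _ _ => 1) g k = g ^ k := by
  induction k with
  | zero => rfl
  | succ k ih => rw [convPow, ih, conv_one_weight_eq_mul, pow_succ']

lemma logSeries_eq_convLog_one_weight (f : PowerSeries ℝ) :
    logSeries f = convLog (fun _ _ => 1) f := by
  simp [logSeries, convLog, convPow_one_weight_eq_pow]

lemma mul_eulerOp_logSeries {f : PowerSeries ℝ} (hf : constantCoeff f = 1) :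
    f * eulerOp (logSeries f) = eulerOp f := by
  rw [logSeries_eq_convLog_one_weight, ← conv_one_weight_eq_mul]
  exact isCommConvWeight_one.conv_eulerOp_convLog hf

@[simp]
lemma constantCoeff_convLog (w : ℕ → ℕ → ℝ) (f : PowerSeries ℝ) :
    constantCoeff (convLog w f) = 0 := by
  rw [← coeff_zero_eq_constantCoeff_apply, convLog, coeff_mk, Icc_eq_empty_of_lt zero_lt_one,
    sum_empty]

@[simp]
lemma constantCoeff_logSeries (f : PowerSeries ℝ) : constantCoeff (logSeries f) = 0 := by
  rw [← coeff_zero_eq_constantCoeff_apply, logSeries, coeff_mk, Icc_eq_empty_of_lt zero_lt_one,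
    sum_empty]

lemma conv_eq_mul_of_weight_eq_one {w : ℕ → ℕ → ℝ} {u v : PowerSeries ℝ}
    (h : ∀ m k, coeff m u ≠ 0 → coeff k v ≠ 0 → w (m + k) m = 1) :
    conv w u v = u * v := by
  rw [← conv_one_weight_eq_mul]
  ext n
  simp only [coeff_conv]
  refine sum_congr rfl fun m hm => ?_
  by_cases hu : coeff m u = 0
  · simp [hu]
  by_cases hv : coeff (n - m) v = 0
  · simp [hv]
  rw [← h m (n - m) hu hv, Nat.add_sub_cancel' (by grind)]

section

variable (q : ℕ)

lemma wq_add (m k : ℕ) :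
    wq q (m + k) m = if (m + k) % q = m % q + k % q then 1 else 0 := by
  have carry := Nat.add_mod_add_ite m k q
  have hk : q = 0 ∨ k % q < q := q.eq_zero_or_pos.imp_right (Nat.mod_lt k)
  unfold wq
  congr 1
  apply propext
  split_ifs at carry <;> omega

lemma isCommConvWeight_wq : IsCommConvWeight (wq q) where
  weight_zero n := by simp [wq]
  weight_comm m k := by rw [wq_add, add_comm m k, wq_add, add_comm (k % q)]
  weight_assoc i j k := by
    have c1 := Nat.add_mod_add_ite i j q
    have c2 := Nat.add_mod_add_ite j k q
    have c3 := Nat.add_mod_add_ite (i + j) k q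
    have c4 := Nat.add_mod_add_ite i (j + k) q
    rw [wq_add, wq_add, add_assoc i j k, wq_add, wq_add, ite_zero_mul_ite_zero,
      ite_zero_mul_ite_zero]
    rw [← add_assoc] at c4 ⊢
    congr 1
    apply propext
    split_ifs at c1 c2 c3 c4 <;> omega

@[simp]
lemma coeff_truncQ (f : PowerSeries ℝ) (n : ℕ) :
    coeff n (truncQ q f) = if n < q then coeff n f else 0 :=
  coeff_mk _ _

lemma constantCoeff_truncQ (hq : q ≠ 0) (f : PowerSeries ℝ) :
    constantCoeff (truncQ q f) = constantCoeff f := by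
  rw [← coeff_zero_eq_constantCoeff_apply, coeff_truncQ, if_pos (Nat.pos_of_ne_zero hq),
    coeff_zero_eq_constantCoeff_apply]

lemma substPow_eq_expand (hq : q ≠ 0) (f : PowerSeries ℝ) : substPow q f = expand q hq f := by
  ext n
  simp [substPow, coeff_expand]

lemma conv_wq_truncQ (u v : PowerSeries ℝ) :
    conv (wq q) (truncQ q u) (truncQ q v) = truncQ q (u * v) := by
  ext n
  rw [coeff_conv, coeff_truncQ, coeff_mul, Nat.sum_antidiagonal_eq_sum_range_succ_mk]
  split_ifs with hn
  · refine sum_congr rfl fun m hm => ?_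
    obtain ⟨k, rfl⟩ := Nat.exists_eq_add_of_le (mem_range_succ_iff.mp hm)
    have hm : m < q := by omega
    have hk : k < q := by omega
    simp [wq_add, hm, hk, Nat.mod_eq_of_lt hn, Nat.mod_eq_of_lt hm, Nat.mod_eq_of_lt hk]
  · refine sum_eq_zero fun m hm => ?_
    obtain ⟨k, rfl⟩ := Nat.exists_eq_add_of_le (mem_range_succ_iff.mp hm)
    rw [Nat.add_sub_cancel_left, coeff_truncQ, coeff_truncQ]
    split_ifs with hm hk
    · have hmk := Nat.mod_lt (m + k) (by omega : 0 < q)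
      rw [wq_add, Nat.mod_eq_of_lt hm, Nat.mod_eq_of_lt hk, if_neg (by omega), zero_mul, zero_mul]
    all_goals simp

lemma conv_wq_truncQ_expand (hq : q ≠ 0) (u v : PowerSeries ℝ) :
    conv (wq q) (truncQ q u) (expand q hq v) = truncQ q u * expand q hq v := by
  refine conv_eq_mul_of_weight_eq_one fun m k hu hv => ?_
  have hm : m < q := by by_contra h; simp [h] at hu
  have hk : q ∣ k := by by_contra h; exact hv (coeff_expand_of_not_dvd q hq v h)
  obtain ⟨c, rfl⟩ := hk
  rw [wq_add, Nat.add_mul_mod_self_left, Nat.mul_mod_right, add_zero, if_pos rfl]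

lemma conv_wq_expand (hq : q ≠ 0) (u v : PowerSeries ℝ) :
    conv (wq q) (expand q hq u) (expand q hq v) = expand q hq (u * v) := by
  rw [map_mul]
  refine conv_eq_mul_of_weight_eq_one fun m k hu hv => ?_
  have hm : q ∣ m := by by_contra h; exact hu (coeff_expand_of_not_dvd q hq u h)
  have hk : q ∣ k := by by_contra h; exact hv (coeff_expand_of_not_dvd q hq v h)
  obtain ⟨c, rfl⟩ := hm
  obtain ⟨d, rfl⟩ := hk
  rw [wq_add, ← mul_add, Nat.mul_mod_right, Nat.mul_mod_right, Nat.mul_mod_right, if_pos rfl]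

lemma eulerOp_truncQ (f : PowerSeries ℝ) : eulerOp (truncQ q f) = truncQ q (eulerOp f) := by
  ext n
  simp only [coeff_eulerOp, coeff_truncQ]
  split_ifs <;> simp

lemma eulerOp_expand (hq : q ≠ 0) (f : PowerSeries ℝ) :
    eulerOp (expand q hq f) = (q : ℝ) • expand q hq (eulerOp f) := by
  ext n
  simp only [coeff_eulerOp, map_smul, coeff_expand, smul_eq_mul]
  split_ifs with h
  · rw [← mul_assoc, ← Nat.cast_mul, Nat.mul_div_cancel' h]
  · simp

lemma conv_wq_truncQ_eulerOp_logSeries {f : PowerSeries ℝ} (hf : constantCoeff f = 1) :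
    conv (wq q) (truncQ q f) (eulerOp (truncQ q (logSeries f))) = eulerOp (truncQ q f) := by
  rw [eulerOp_truncQ, conv_wq_truncQ, mul_eulerOp_logSeries hf, eulerOp_truncQ]

lemma conv_wq_expand_eulerOp_logSeries (hq : q ≠ 0) {f : PowerSeries ℝ}
    (hf : constantCoeff f = 1) :
    conv (wq q) (expand q hq f) (eulerOp (expand q hq (logSeries f))) =
      eulerOp (expand q hq f) := by
  rw [eulerOp_expand, conv_smul_right, conv_wq_expand, mul_eulerOp_logSeries hf, eulerOp_expand]

end

/-- `log_∘([b]_q · a(x^q)) = [log b]_q + (log a)(x^q)` for the `P_{0,q}`-convolution. -/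
theorem stmt2 (q : ℕ) (hq : 2 ≤ q) (a b : PowerSeries ℝ)
    (ha : constantCoeff a = 1) (hb : constantCoeff b = 1) :
    convLog (wq q) (truncQ q b * substPow q a) =
      truncQ q (logSeries b) + substPow q (logSeries a) := by
  have hq0 : q ≠ 0 := by omega
  have hW := isCommConvWeight_wq q
  rw [substPow_eq_expand q hq0, substPow_eq_expand q hq0, ← conv_wq_truncQ_expand q hq0]
  have hf : constantCoeff (conv (wq q) (truncQ q b) (expand q hq0 a)) = 1 := by
    rw [conv_wq_truncQ_expand, map_mul, constantCoeff_truncQ q hq0, constantCoeff_expand, ha, hb,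
      one_mul]
  refine eq_of_eulerOp_eq (conv_left_cancel _ hW.weight_zero hf ?_) ?_
  · rw [hW.conv_eulerOp_convLog hf, hW.conv_eulerOp_add (conv_wq_truncQ_eulerOp_logSeries q hb)
      (conv_wq_expand_eulerOp_logSeries q hq0 ha)]
  · simp [constantCoeff_truncQ q hq0]
end

section
/- For all n, m ∈ ℕ and i, j ∈ {0,1}, the coefficient of x^{2n+i} in the formal power series x^{2m+j} · Π_{r=0}^{2m+j} (1 − (−1)^r x)^{−1} equals the binomial coefficient C(n,m) if i ≥ j, and equals 0 if i < j. -/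
open PowerSeries Finset

/-!
Pairing the factors `r = 2k, 2k + 1` gives `(1 - x)(1 + x) = 1 - x²`, so the product is
`(1 - x²)^m (1 - x)` for `j = 0` and `(1 - x²)^(m+1)` for `j = 1`. The series
`x^{2m} / (1 - x²)^{m+1}` is the substitution `x ↦ x²` into
`x^m / (1 - x)^{m+1} = ∑ C(n, m) xⁿ`, so it has `C(n, m)` at `x^{2n}` and nothing at odd
degrees; the remaining factor `1 + x` or `x` distributes these coefficients over the degrees
`2n + i`.
-/

namespace PowerSeries

section CommRing

variable {R : Type*} [CommRing R]

theorem X_pow_mul_mk_add_choose (m : ℕ) :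
    X ^ m * mk (fun n ↦ ((m + n).choose m : R)) = mk fun n ↦ (n.choose m : R) := by
  ext N
  rw [coeff_X_pow_mul', coeff_mk, coeff_mk]
  split_ifs with h
  · rw [Nat.add_sub_cancel' h]
  · rw [Nat.choose_eq_zero_of_lt (not_le.mp h), Nat.cast_zero]

theorem prod_range_two_mul_one_sub_neg_one_pow_mul_X (m : ℕ) :
    ∏ r ∈ range (2 * m), (1 - C ((-1 : R) ^ r) * X) = (1 - X ^ 2) ^ m := by
  induction m with
  | zero => simp
  | succ m ih =>
    rw [Nat.mul_succ, prod_range_succ, prod_range_succ, ih, pow_succ _ (2 * m), pow_mul,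
      neg_one_sq, one_pow, map_one, one_mul, one_mul, map_neg, map_one]
    ring

variable (φ : R⟦X⟧) (n : ℕ)

theorem coeff_two_mul_add_one_expand_two : coeff (2 * n + 1) (expand 2 two_ne_zero φ) = 0 :=
  coeff_expand_of_not_dvd _ _ _ (by omega)

theorem coeff_two_mul_X_mul_expand_two : coeff (2 * n) (X * expand 2 two_ne_zero φ) = 0 := by
  cases n with
  | zero => simp
  | succ n => rw [show 2 * (n + 1) = 2 * n + 1 + 1 by ring, coeff_succ_X_mul,
      coeff_two_mul_add_one_expand_two]

end CommRing

section Field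

variable {k : Type*} [Field k]

theorem prod_inv_distrib {ι : Type*} (s : Finset ι) (f : ι → k⟦X⟧) :
    ∏ i ∈ s, (f i)⁻¹ = (∏ i ∈ s, f i)⁻¹ := by
  classical
  induction s using Finset.induction_on with
  | empty => simp
  | insert a s ha ih => rw [prod_insert ha, prod_insert ha, ih, PowerSeries.mul_inv_rev, mul_comm]

theorem inv_one_sub_X_sq_pow (m : ℕ) :
    ((1 - X ^ 2 : k⟦X⟧) ^ (m + 1))⁻¹ =
      expand 2 two_ne_zero (mk fun n ↦ ((m + n).choose m : k)) := by
  rw [inv_eq_iff_mul_eq_one (by simp), ← expand_X (R := k) 2 two_ne_zero,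
    ← map_one (expand 2 two_ne_zero), ← map_sub, ← map_pow, ← map_mul,
    mk_add_choose_mul_one_sub_pow_eq_one, map_one]

theorem X_pow_two_mul_mul_inv_one_sub_X_sq_pow (m : ℕ) :
    X ^ (2 * m) * ((1 - X ^ 2 : k⟦X⟧) ^ (m + 1))⁻¹ =
      expand 2 two_ne_zero (mk fun n ↦ (n.choose m : k)) := by
  rw [inv_one_sub_X_sq_pow, ← X_pow_mul_mk_add_choose, map_mul, map_pow, expand_X, pow_mul]

theorem X_pow_mul_inv_prod_range_two_mul_add_one (m : ℕ) :
    X ^ (2 * m) * (∏ r ∈ range (2 * m + 1), (1 - C ((-1 : k) ^ r) * X))⁻¹ =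
      (1 + X) * expand 2 two_ne_zero (mk fun n ↦ (n.choose m : k)) := by
  have hprod : (1 - X ^ 2 : k⟦X⟧) ^ (m + 1) =
      (∏ r ∈ range (2 * m + 1), (1 - C ((-1 : k) ^ r) * X)) * (1 + X) := by
    rw [prod_range_succ, prod_range_two_mul_one_sub_neg_one_pow_mul_X, pow_mul, neg_one_sq,
      one_pow, map_one, one_mul]
    ring
  rw [← X_pow_two_mul_mul_inv_one_sub_X_sq_pow, hprod, PowerSeries.mul_inv_rev, mul_left_comm,
    ← mul_assoc (1 + X), PowerSeries.mul_inv_cancel _ (by simp), one_mul]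

theorem X_pow_mul_inv_prod_range_two_mul_add_two (m : ℕ) :
    X ^ (2 * m + 1) * (∏ r ∈ range (2 * m + 1 + 1), (1 - C ((-1 : k) ^ r) * X))⁻¹ =
      X * expand 2 two_ne_zero (mk fun n ↦ (n.choose m : k)) := by
  rw [show 2 * m + 1 + 1 = 2 * (m + 1) by ring, prod_range_two_mul_one_sub_neg_one_pow_mul_X,
    pow_succ', mul_assoc, X_pow_two_mul_mul_inv_one_sub_X_sq_pow]

end Field

end PowerSeries

/-- The coefficient of `x^{2n+i}` in `x^{2m+j} · Π_{r=0}^{2m+j} (1 − (−1)^r x)⁻¹`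
equals `C(n,m)` if `i ≥ j` and `0` if `i < j` (for `i, j ∈ {0,1}`): columns of the matrix
of `q`-binomial coefficients at `q = −1`. -/
theorem stmt3 (n m i j : ℕ) (hi : i < 2) (hj : j < 2) :
    coeff (R := ℝ) (2 * n + i)
        ((X : PowerSeries ℝ) ^ (2 * m + j) *
          ∏ r ∈ Finset.range (2 * m + j + 1), (1 - C (R := ℝ) ((-1 : ℝ) ^ r) * X)⁻¹) =
      if j ≤ i then (n.choose m : ℝ) else 0 := by
  rw [PowerSeries.prod_inv_distrib]
  interval_cases j
  · rw [Nat.add_zero, X_pow_mul_inv_prod_range_two_mul_add_one, add_mul, one_mul, map_add]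
    interval_cases i
    · simp [coeff_two_mul_X_mul_expand_two]
    · simp [coeff_two_mul_add_one_expand_two]
  · rw [X_pow_mul_inv_prod_range_two_mul_add_two]
    interval_cases i
    · simp [coeff_two_mul_X_mul_expand_two]
    · simp
end

section
/- Let q ≥ 2 and k ≥ 1 be integers. For all n, m ∈ ℕ and all 0 ≤ i, j < q^k: W_q(q^k·n + i, q^k·m + j) = W_q(n,m) · W_q(i,j). -/
/-!
Modulo `q ^ r` with `r ≤ k` both arguments reduce to their low parts `i`, `j`; modulo
`q ^ (k + s)` they become `q ^ k * (n % q ^ s) + i` and `q ^ k * (m % q ^ s) + j`, which compare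
like `n % q ^ s` and `m % q ^ s` once `j ≤ i` (the case `r = k`) is known. So the condition
defining `W_q` splits into the conditions for `(n, m)` and for `(i, j)`.
-/

open Finset

open scoped Classical in
/-- The `(N,M)` entry of the generalized Sierpinski matrix `P_{[0,q]}`:
`W_q(N,M) = 1` if `N mod q^r ≥ M mod q^r` for every `r ≥ 1`, else `0`. -/
noncomputable def Wq (q N M : ℕ) : ℝ :=
  if ∀ r : ℕ, 1 ≤ r → M % q ^ r ≤ N % q ^ r then 1 else 0

namespace Nat

lemma mul_add_mod_of_dvd {c d : ℕ} (h : d ∣ c) (n i : ℕ) : (c * n + i) % d = i % d := by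
  obtain ⟨e, rfl⟩ := h
  rw [mul_assoc, Nat.mul_add_mod]

lemma mul_add_mod_mul {c i : ℕ} (hi : i < c) (n d : ℕ) :
    (c * n + i) % (c * d) = c * (n % d) + i := by
  rw [Nat.mod_mul, Nat.mul_add_mod, Nat.mod_eq_of_lt hi, Nat.mul_add_div (by omega),
    Nat.div_eq_of_lt hi, add_zero, add_comm]

lemma mul_add_le_mul_add_iff {c i j a b : ℕ} (hi : i < c) (hji : j ≤ i) :
    c * b + j ≤ c * a + i ↔ b ≤ a := by
  refine ⟨fun h => ?_, fun h => by gcongr⟩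
  calc b = (c * b + j) / c := by
        rw [Nat.mul_add_div (by omega), Nat.div_eq_of_lt (by omega), add_zero]
    _ ≤ (c * a + i) / c := Nat.div_le_div_right h
    _ = a := by rw [Nat.mul_add_div (by omega), Nat.div_eq_of_lt hi, add_zero]

end Nat

def ModPowLE (q M N : ℕ) : Prop := ∀ r, M % q ^ r ≤ N % q ^ r

open scoped Classical in
lemma Wq_eq_ite (q N M : ℕ) : Wq q N M = if ModPowLE q M N then 1 else 0 := by
  refine if_congr ⟨fun h r => ?_, fun h r _ => h r⟩ rfl rfl
  rcases r with _ | r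
  · rw [pow_zero, Nat.mod_one, Nat.mod_one]
  · exact h _ r.succ_pos

lemma modPowLE_mul_pow_add_iff {q k n m i j : ℕ} (hi : i < q ^ k) (hj : j < q ^ k) :
    ModPowLE q (q ^ k * m + j) (q ^ k * n + i) ↔ ModPowLE q m n ∧ ModPowLE q j i := by
  have low {r} (hr : r ≤ k) (x y : ℕ) : (q ^ k * x + y) % q ^ r = y % q ^ r :=
    Nat.mul_add_mod_of_dvd (pow_dvd_pow q hr) x y
  have high {y} (hy : y < q ^ k) (s x : ℕ) :
      (q ^ k * x + y) % q ^ (k + s) = q ^ k * (x % q ^ s) + y := by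
    rw [pow_add, Nat.mul_add_mod_mul hy]
  have mod_pow_add {y} (hy : y < q ^ k) (s : ℕ) : y % q ^ (k + s) = y := by
    simpa using high hy s 0
  have hji_of_low (h : j % q ^ k ≤ i % q ^ k) : j ≤ i := by
    rwa [Nat.mod_eq_of_lt hi, Nat.mod_eq_of_lt hj] at h
  constructor
  · intro h
    have hji : j ≤ i := hji_of_low (by simpa only [low le_rfl] using h k)
    refine ⟨fun s => ?_, fun r => ?_⟩
    · simpa only [high hi, high hj, Nat.mul_add_le_mul_add_iff hi hji] using h (k + s)
    · rcases le_or_gt r k with hr | hr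
      · simpa only [low hr] using h r
      · obtain ⟨s, rfl⟩ := Nat.exists_eq_add_of_le hr.le
        rwa [mod_pow_add hi, mod_pow_add hj]
  · rintro ⟨hmn, hji'⟩ r
    have hji : j ≤ i := hji_of_low (hji' k)
    rcases le_or_gt r k with hr | hr
    · simpa only [low hr] using hji' r
    · obtain ⟨s, rfl⟩ := Nat.exists_eq_add_of_le hr.le
      simpa only [high hi, high hj, Nat.mul_add_le_mul_add_iff hi hji] using hmn s

theorem stmt5_general (q k : ℕ) (n m i j : ℕ)
    (hi : i < q ^ k) (hj : j < q ^ k) :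
    Wq q (q ^ k * n + i) (q ^ k * m + j) = Wq q n m * Wq q i j := by
  rw [Wq_eq_ite, Wq_eq_ite, Wq_eq_ite, ite_zero_mul_ite_zero, modPowLE_mul_pow_add_iff hi hj,
    mul_one]
  congr

/-- Multiplicativity of the Sierpinski entries:
`W_q(q^k·n + i, q^k·m + j) = W_q(n,m) · W_q(i,j)` for `0 ≤ i, j < q^k`. -/
theorem stmt5 (q k : ℕ) (hq : 2 ≤ q) (hk : 1 ≤ k) (n m i j : ℕ)
    (hi : i < q ^ k) (hj : j < q ^ k) :
    Wq q (q ^ k * n + i) (q ^ k * m + j) = Wq q n m * Wq q i j :=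
  stmt5_general q k n m i j hi hj
end

section
/- Let q ≥ 2 and k ≥ 1 be integers. For all real formal power series a, b: a(x^{q^k}) ∘ b(x^{q^k}) = (a ∘ b)(x^{q^k}), where ∘ is the P_{[0,q]}-convolution and f(x^{q^k}) denotes substitution of x^{q^k} for x. Hence the map a ↦ a(x^{q^k}) is an algebra embedding of the P_{[0,q]}-convolution algebra onto the subalgebra of series in x^{q^k}. -/
open PowerSeries Finset

/-!
Multiplying by `q^k` shifts the base-`q` digits by `k` places, so the residues modulo `q^r`
are either all zero (`r ≤ k`) or scaled by `q^k` (`r > k`), and `W_q(q^k N, q^k M) = W_q(N, M)`.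
In the convolution of two series in `x^{q^k}` only indices divisible by `q^k` contribute,
and the sum collapses to the convolution of the original coefficients.
-/

lemma pow_mul_mod_pow_le_iff {q : ℕ} (hq : 0 < q) (k N M : ℕ) :
    (∀ r, 1 ≤ r → q ^ k * M % q ^ r ≤ q ^ k * N % q ^ r) ↔
      ∀ r, 1 ≤ r → M % q ^ r ≤ N % q ^ r := by
  constructor
  · intro h s hs
    have hks := h (k + s) (by omega)
    rw [pow_add, Nat.mul_mod_mul_left, Nat.mul_mod_mul_left] at hks
    exact Nat.le_of_mul_le_mul_left hks (pow_pos hq k)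
  · intro h r hr
    rcases le_or_gt r k with hrk | hkr
    · rw [Nat.mod_eq_zero_of_dvd (dvd_mul_of_dvd_left (pow_dvd_pow q hrk) M)]
      exact Nat.zero_le _
    · obtain ⟨s, rfl⟩ := Nat.exists_eq_add_of_le hkr.le
      rw [pow_add, Nat.mul_mod_mul_left, Nat.mul_mod_mul_left]
      exact Nat.mul_le_mul_left _ (h _ (by omega))

lemma Wq_pow_mul_pow {q : ℕ} (hq : 0 < q) (k N M : ℕ) :
    Wq q (q ^ k * N) (q ^ k * M) = Wq q N M := by
  classical
  rw [Wq, Wq, if_congr (pow_mul_mod_pow_le_iff hq k N M) rfl rfl]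

lemma sum_range_mul_add_one_of_eq_zero_of_not_dvd {t : ℕ} (ht : 0 < t) (N : ℕ) {g : ℕ → ℝ}
    (hg : ∀ m, ¬ t ∣ m → g m = 0) :
    ∑ m ∈ range (t * N + 1), g m = ∑ M ∈ range (N + 1), g (t * M) := by
  symm
  refine sum_of_injOn (t * ·) (fun _ _ _ _ h => Nat.eq_of_mul_eq_mul_left ht h) ?_ ?_
    (fun _ _ => rfl)
  · intro M hM
    simp only [coe_range, Set.mem_Iio] at hM ⊢
    have := Nat.mul_le_mul_left t (Nat.lt_succ_iff.mp hM)
    omega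
  · rintro m hm hm'
    refine hg m fun ⟨M, hM⟩ => hm' ⟨M, ?_, hM.symm⟩
    simp only [coe_range, Set.mem_Iio, mem_range, hM] at hm ⊢
    have : t * M ≤ t * N := by omega
    exact Nat.lt_succ_of_le (Nat.le_of_mul_le_mul_left this ht)

section substPow

variable {t : ℕ}

lemma coeff_substPow_mul (ht : 0 < t) (n : ℕ) (f : PowerSeries ℝ) :
    coeff (t * n) (substPow t f) = coeff n f := by
  simp [substPow, Nat.mul_div_cancel_left _ ht]

lemma coeff_substPow_of_not_dvd {n : ℕ} (hn : ¬ t ∣ n) (f : PowerSeries ℝ) :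
    coeff n (substPow t f) = 0 := by
  simp [substPow, hn]

lemma substPow_injective (ht : 0 < t) : Function.Injective (substPow t) := by
  intro a b h
  ext n
  simpa only [coeff_substPow_mul ht] using congrArg (coeff (t * n)) h

lemma conv_substPow (ht : 0 < t) {w : ℕ → ℕ → ℝ} (hw : ∀ N M, w (t * N) (t * M) = w N M)
    (a b : PowerSeries ℝ) :
    conv w (substPow t a) (substPow t b) = substPow t (conv w a b) := by
  ext n
  simp only [conv, coeff_mk]
  by_cases hn : t ∣ n
  · obtain ⟨N, rfl⟩ := hn
    rw [coeff_substPow_mul ht, coeff_mk, sum_range_mul_add_one_of_eq_zero_of_not_dvd ht N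
      fun m hm => by rw [coeff_substPow_of_not_dvd hm, mul_zero, zero_mul]]
    refine sum_congr rfl fun M _ => ?_
    rw [← Nat.mul_sub, coeff_substPow_mul ht, coeff_substPow_mul ht, hw]
  · rw [coeff_substPow_of_not_dvd hn]
    refine sum_eq_zero fun m hm => ?_
    by_cases hm_dvd : t ∣ m
    · have hnm : ¬ t ∣ n - m := fun h =>
        hn (Nat.sub_add_cancel (Nat.lt_succ_iff.mp (mem_range.mp hm)) ▸ Nat.dvd_add h hm_dvd)
      rw [coeff_substPow_of_not_dvd hnm, mul_zero]
    · rw [coeff_substPow_of_not_dvd hm_dvd, mul_zero, zero_mul]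

end substPow

theorem stmt7_general (q k : ℕ) (hq : 2 ≤ q) :
    (∀ a b : PowerSeries ℝ,
      conv (Wq q) (substPow (q ^ k) a) (substPow (q ^ k) b) =
        substPow (q ^ k) (conv (Wq q) a b)) ∧
    Function.Injective (substPow (q ^ k)) := by
  have hq_pos : 0 < q := by omega
  have ht : 0 < q ^ k := pow_pos hq_pos k
  exact ⟨conv_substPow ht (Wq_pow_mul_pow hq_pos k), substPow_injective ht⟩

/-- `a(x^{q^k}) ∘ b(x^{q^k}) = (a ∘ b)(x^{q^k})` for the `P_{[0,q]}`-convolution;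
together with injectivity, `a ↦ a(x^{q^k})` is an algebra embedding of the
`P_{[0,q]}`-convolution algebra onto the subalgebra of series in `x^{q^k}`. -/
theorem stmt7 (q k : ℕ) (hq : 2 ≤ q) (hk : 1 ≤ k) :
    (∀ a b : PowerSeries ℝ,
      conv (Wq q) (substPow (q ^ k) a) (substPow (q ^ k) b) =
        substPow (q ^ k) (conv (Wq q) a b)) ∧
    Function.Injective (substPow (q ^ k)) :=
  stmt7_general q k hq
end

section
/- Let q ≥ 2 be an integer, n ∈ ℕ, and φ, β ∈ ℝ. Then (φ+β)^{{n}} = Σ_{m=0}^n C_q(n,m)·φ^{{m}}·β^{{n−m}}. -/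
open Finset

/-- Base-`q` digit sum `{n} = Σ_t n_t`, where `n_t = n / q^t % q` (the sum is over a
range large enough to contain all nonzero digits when `q ≥ 2`). -/
def digitSum (q n : ℕ) : ℕ := ∑ t ∈ Finset.range (n + 1), n / q ^ t % q

/-- `C_q(n,m) = Π_t binom(n_t, m_t)`; the range contains all nonzero digits of `n` and `m`
when `q ≥ 2`. -/
def Cq (q n m : ℕ) : ℕ :=
  ∏ t ∈ Finset.range (n + m + 1), Nat.choose (n / q ^ t % q) (m / q ^ t % q)

/-!
Split off the lowest digit: for `n = q a + b` and `m = q c + d` with `b, d < q`, both the digit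
sums and `C_q` factor into the contribution of the last digit and that of `a`, `c`. So the
`m`-sum for `n` factors as the ordinary binomial expansion of `(φ + β)^b` times the `m`-sum
for `a`, and strong induction on `n` gives the claim.
-/

theorem Finset.sum_range_mul_eq_sum_sum {M : Type*} [AddCommMonoid M] (q k : ℕ) (f : ℕ → M) :
    ∑ m ∈ range (q * k), f m = ∑ c ∈ range k, ∑ d ∈ range q, f (q * c + d) := by
  induction k with
  | zero => simp
  | succ k ih => rw [Nat.mul_succ, sum_range_add, ih, sum_range_succ]

theorem add_pow_eq_sum_range_of_lt {R : Type*} [CommSemiring R] (x y : R) {b N : ℕ}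
    (hb : b < N) :
    (x + y) ^ b = ∑ d ∈ range N, (b.choose d : R) * x ^ d * y ^ (b - d) := by
  rw [add_pow]
  refine sum_subset (range_subset_range.mpr hb) (fun d _ hd => ?_) |>.trans
    (sum_congr rfl fun d _ => by ring)
  rw [Nat.choose_eq_zero_of_lt (by simpa using hd), Nat.cast_zero, mul_zero]

theorem Nat.div_pow_eq_zero_of_le {q n t : ℕ} (hq : 2 ≤ q) (ht : n ≤ t) : n / q ^ t = 0 :=
  Nat.div_eq_of_lt ((Nat.lt_pow_self hq).trans_le (Nat.pow_le_pow_right (by omega) ht))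

theorem Nat.mul_add_div_pow_succ {q c d : ℕ} (hd : d < q) (t : ℕ) :
    (q * c + d) / q ^ (t + 1) = c / q ^ t := by
  rw [pow_succ', ← Nat.div_div_eq_div_mul, Nat.mul_add_div (by omega), Nat.div_eq_of_lt hd,
    Nat.add_zero]

theorem digitSum_eq_sum_range {q n N : ℕ} (hq : 2 ≤ q) (hN : n ≤ N) :
    digitSum q n = ∑ t ∈ range N, n / q ^ t % q := by
  have vanish : ∀ t, n ≤ t → n / q ^ t % q = 0 := fun t ht => by
    rw [Nat.div_pow_eq_zero_of_le hq ht, Nat.zero_mod]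
  rw [digitSum, sum_range_succ, vanish n le_rfl, add_zero]
  exact sum_subset (range_subset_range.mpr hN) fun t _ ht => vanish t (by simpa using ht)

theorem Cq_eq_prod_range {q n m N : ℕ} (hq : 2 ≤ q) (hN : n + m ≤ N) :
    Cq q n m = ∏ t ∈ range N, (n / q ^ t % q).choose (m / q ^ t % q) := by
  have vanish : ∀ t, n + m ≤ t → (n / q ^ t % q).choose (m / q ^ t % q) = 1 := fun t ht => by
    rw [Nat.div_pow_eq_zero_of_le hq (by omega), Nat.div_pow_eq_zero_of_le (n := m) hq (by omega),
      Nat.zero_mod, Nat.choose_self]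
  rw [Cq, prod_range_succ, vanish _ le_rfl, mul_one]
  exact prod_subset (range_subset_range.mpr hN) fun t _ ht => vanish t (by simpa using ht)

theorem digitSum_mul_add {q c d : ℕ} (hq : 2 ≤ q) (hd : d < q) :
    digitSum q (q * c + d) = d + digitSum q c := by
  have hc : c ≤ q * c + d := by nlinarith
  rw [digitSum, sum_range_succ', digitSum_eq_sum_range hq hc]
  simp only [Nat.mul_add_div_pow_succ hd, pow_zero, Nat.div_one, Nat.mul_add_mod_self_left,
    Nat.mod_eq_of_lt hd]
  ring

theorem Cq_mul_add {q a b c d : ℕ} (hq : 2 ≤ q) (hb : b < q) (hd : d < q) :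
    Cq q (q * a + b) (q * c + d) = b.choose d * Cq q a c := by
  have hac : a + c ≤ q * a + b + (q * c + d) := by nlinarith
  rw [Cq, prod_range_succ', Cq_eq_prod_range hq hac]
  simp only [Nat.mul_add_div_pow_succ hb, Nat.mul_add_div_pow_succ hd, pow_zero, Nat.div_one,
    Nat.mul_add_mod_self_left, Nat.mod_eq_of_lt hb, Nat.mod_eq_of_lt hd]
  ring

theorem Cq_eq_zero_of_lt {q n m : ℕ} (hq : 2 ≤ q) (h : n < m) : Cq q n m = 0 := by
  induction m using Nat.strong_induction_on generalizing n with
  | _ m ih =>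
    rw [← Nat.div_add_mod n q, ← Nat.div_add_mod m q,
      Cq_mul_add hq (Nat.mod_lt _ (by omega)) (Nat.mod_lt _ (by omega))]
    rcases lt_or_ge (n % q) (m % q) with hd | hd
    · rw [Nat.choose_eq_zero_of_lt hd, zero_mul]
    · -- the last digit of `m` does not exceed that of `n`, so `m / q` exceeds `n / q`
      have hdiv : n / q < m / q := by
        by_contra! hle
        have := Nat.div_add_mod n q
        have := Nat.div_add_mod m q
        nlinarith
      rw [ih (m / q) (Nat.div_lt_self (by omega) (by omega)) hdiv, mul_zero]

section FractalBinomial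

variable {R : Type*} [CommSemiring R]

def fractalBinomialTerm (q : ℕ) (x y : R) (n m : ℕ) : R :=
  Cq q n m * x ^ digitSum q m * y ^ digitSum q (n - m)

theorem sum_fractalBinomialTerm_eq_sum_range {q n N : ℕ} (hq : 2 ≤ q) (x y : R) (hN : n < N) :
    ∑ m ∈ range (n + 1), fractalBinomialTerm q x y n m =
      ∑ m ∈ range N, fractalBinomialTerm q x y n m := by
  refine sum_subset (range_subset_range.mpr hN) fun m _ hm => ?_
  rw [fractalBinomialTerm, Cq_eq_zero_of_lt hq (by simpa using hm)]
  simp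

theorem fractalBinomialTerm_mul_add {q a b c d : ℕ} (hq : 2 ≤ q) (x y : R) (hb : b < q)
    (hd : d < q) (hc : c ≤ a) :
    fractalBinomialTerm q x y (q * a + b) (q * c + d) =
      (b.choose d * x ^ d * y ^ (b - d)) * fractalBinomialTerm q x y a c := by
  rcases lt_or_ge b d with hbd | hdb
  · simp [fractalBinomialTerm, Cq_mul_add hq hb hd, Nat.choose_eq_zero_of_lt hbd]
  have hsub : q * a + b - (q * c + d) = q * (a - c) + (b - d) := by
    have := Nat.mul_le_mul_left q hc
    rw [Nat.mul_sub]
    omega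
  rw [fractalBinomialTerm, fractalBinomialTerm, hsub, Cq_mul_add hq hb hd,
    digitSum_mul_add hq hd, digitSum_mul_add hq (by omega)]
  push_cast
  ring

theorem add_pow_digitSum_eq_sum_fractalBinomialTerm {q : ℕ} (hq : 2 ≤ q) (x y : R) (n : ℕ) :
    (x + y) ^ digitSum q n = ∑ m ∈ range (n + 1), fractalBinomialTerm q x y n m := by
  induction n using Nat.strong_induction_on with
  | _ n ih =>
  rcases Nat.eq_zero_or_pos n with rfl | hn
  · simp [digitSum, fractalBinomialTerm, Cq]
  obtain ⟨a, b, hb, rfl⟩ : ∃ a b, b < q ∧ n = q * a + b :=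
    ⟨n / q, n % q, Nat.mod_lt _ (by omega), (Nat.div_add_mod n q).symm⟩
  have ha : a < q * a + b := by
    have := Nat.mul_le_mul_right a hq
    omega
  have hN : q * a + b < q * (a + 1) := by rw [Nat.mul_succ]; omega
  calc (x + y) ^ digitSum q (q * a + b)
      = (∑ d ∈ range q, (b.choose d * x ^ d * y ^ (b - d) : R)) *
          ∑ c ∈ range (a + 1), fractalBinomialTerm q x y a c := by
        rw [digitSum_mul_add hq hb, pow_add, add_pow_eq_sum_range_of_lt x y hb, ih a ha]
    _ = ∑ c ∈ range (a + 1), ∑ d ∈ range q,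
          fractalBinomialTerm q x y (q * a + b) (q * c + d) := by
        rw [sum_mul_sum, sum_comm]
        refine sum_congr rfl fun c hc => sum_congr rfl fun d hd => ?_
        exact (fractalBinomialTerm_mul_add hq x y hb (mem_range.mp hd)
          (Nat.lt_succ_iff.mp (mem_range.mp hc))).symm
    _ = ∑ m ∈ range (q * a + b + 1), fractalBinomialTerm q x y (q * a + b) m := by
        rw [sum_fractalBinomialTerm_eq_sum_range hq x y hN, sum_range_mul_eq_sum_sum]

end FractalBinomial

/-- The fractal binomial theorem: `(φ+β)^{{n}} = Σ_{m=0}^n C_q(n,m)·φ^{{m}}·β^{{n−m}}`. -/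
theorem stmt16 (q : ℕ) (hq : 2 ≤ q) (n : ℕ) (φ β : ℝ) :
    (φ + β) ^ digitSum q n =
      ∑ m ∈ Finset.range (n + 1),
        (Cq q n m : ℝ) * φ ^ digitSum q m * β ^ digitSum q (n - m) :=
  add_pow_digitSum_eq_sum_fractalBinomialTerm hq φ β n
end
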